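/- arXiv:2106.04383 — 4 statements merged into one kernel-verified Lean document; each statement's English description precedes it below -/
import Mathlib

section
/- (Theorem 2, global convergence.) Let f : ℝ^n → ℝ be continuously differentiable with gradient g = ∇f that is Lipschitz continuous with constant L > 0, and suppose f is bounded from below. Let x : ℕ → ℝ^n, d : ℕ → ℝ^n, and α : ℕ → ℝ be sequences with α_k > 0 and x_{k+1} = x_k + α_k·d_k, and write g_k = ∇f(x_k). Assume: (i) each step satisfies the strong Wolfe–Powell conditions, i.e. f(x_k + α_k·d_k) ≤ f(x_k) + δ·α_k·⟨g_k, d_k⟩ and |⟨∇f(x_k + α_k·d_k), d_k⟩| ≤ σ·|⟨g_k, d_k⟩| with constants 0 < δ < σ < 1; (ii) the sufficient descent condition holds: there is c > 0 with ⟨g_k, d_k⟩ ≤ -c‖g_k‖² for all k; and (iii) the series ∑_{k≥1} 1/‖d_k‖² diverges (with d_k ≠ 0 for all k). Then lim inf_{k→∞} ‖g_k‖ = 0. -/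
open Filter RealInnerProductSpace

/-- Theorem 2: global convergence of the method. Under the standard assumptions,
strong Wolfe–Powell line searches, sufficient descent, and divergence of
∑ 1/‖d k‖², the gradient norms have liminf zero. -/
theorem global_convergence
    (n : ℕ) (f : EuclideanSpace ℝ (Fin n) → ℝ)
    (hf : ContDiff ℝ 1 f)
    (L : NNReal) (hL : 0 < L) (hlip : LipschitzWith L (fun x => gradient f x))
    (hbdd : BddBelow (Set.range f))
    (x d : ℕ → EuclideanSpace ℝ (Fin n)) (α : ℕ → ℝ)
    (hα : ∀ k, 0 < α k)
    (hx : ∀ k, x (k + 1) = x k + α k • d k)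
    (δ σ : ℝ) (hδ : 0 < δ) (hδσ : δ < σ) (hσ : σ < 1)
    (hWolfe1 : ∀ k, f (x k + α k • d k) ≤
      f (x k) + δ * α k * ⟪gradient f (x k), d k⟫)
    (hWolfe2 : ∀ k, |⟪gradient f (x k + α k • d k), d k⟫| ≤
      σ * |⟪gradient f (x k), d k⟫|)
    (c : ℝ) (hc : 0 < c)
    (hdesc : ∀ k, ⟪gradient f (x k), d k⟫ ≤ -c * ‖gradient f (x k)‖ ^ 2)
    (hdne : ∀ k, d k ≠ 0)
    (hdiv : Tendsto (fun N : ℕ => ∑ k ∈ Finset.Icc 1 N, 1 / ‖d k‖ ^ 2)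
      atTop atTop) :
    liminf (fun k => ‖gradient f (x k)‖) atTop = 0 := by
  obtain ⟨B, hB⟩ := hbdd
  have hB' : ∀ y, B ≤ f y := fun y => hB ⟨y, rfl⟩
  set g : ℕ → EuclideanSpace ℝ (Fin n) := fun k => gradient f (x k) with hg
  have hσ1 : (0:ℝ) < 1 - σ := by linarith
  have hLpos : (0:ℝ) < (L:ℝ) := hL
  have hd2 : ∀ k, (0:ℝ) < ‖d k‖ := fun k => norm_pos_iff.mpr (hdne k)
  -- auxiliary: m k = -⟪g k, d k⟫
  have hmg : ∀ k, c * ‖g k‖^2 ≤ -⟪g k, d k⟫ := by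
    intro k; have := hdesc k; linarith
  have hm0 : ∀ k, 0 ≤ -⟪g k, d k⟫ := by
    intro k
    have h1 : 0 ≤ c * ‖g k‖^2 := by positivity
    linarith [hmg k]
  set D : ℝ := δ * (1 - σ) * c^2 with hD
  have hDpos : 0 < D := by positivity
  -- key per-step inequality
  have key : ∀ k, D * (‖g k‖^4 / ‖d k‖^2) ≤ (L:ℝ) * (f (x k) - f (x (k+1))) := by
    intro k
    set m : ℝ := -⟪g k, d k⟫ with hmdef
    have hm : 0 ≤ m := hm0 k
    have habs : |⟪g k, d k⟫| = m := abs_of_nonpos (by linarith)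
    have hW2 := hWolfe2 k
    rw [habs] at hW2
    have hgk1 : gradient f (x (k+1)) = gradient f (x k + α k • d k) := by rw [hx k]
    have h1 : -(σ * m) ≤ ⟪g (k+1), d k⟫ := by
      have := neg_abs_le (⟪gradient f (x k + α k • d k), d k⟫)
      have h := neg_le_neg hW2
      simp only [hg, hgk1]
      linarith
    have hlipk : ‖g (k+1) - g k‖ ≤ (L:ℝ) * (α k * ‖d k‖) := by
      have h := hlip.dist_le_mul (x (k+1)) (x k)
      rw [dist_eq_norm, dist_eq_norm] at h
      have hx' : x (k+1) - x k = α k • d k := by rw [hx k]; abel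
      rw [hx', norm_smul, Real.norm_eq_abs, abs_of_pos (hα k)] at h
      exact h
    have h2 : ⟪g (k+1) - g k, d k⟫ ≤ (L:ℝ) * (α k * ‖d k‖) * ‖d k‖ :=
      le_trans (real_inner_le_norm _ _)
        (mul_le_mul_of_nonneg_right hlipk (norm_nonneg _))
    have h3 : ⟪g (k+1) - g k, d k⟫ = ⟪g (k+1), d k⟫ + m := by
      rw [inner_sub_left]; simp only [hmdef]; ring
    have F1 : (1 - σ) * m ≤ (L:ℝ) * α k * ‖d k‖^2 := by
      have : (1 - σ) * m ≤ ⟪g (k+1), d k⟫ + m := by linarith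
      calc (1 - σ) * m ≤ ⟪g (k+1), d k⟫ + m := this
        _ = ⟪g (k+1) - g k, d k⟫ := h3.symm
        _ ≤ (L:ℝ) * (α k * ‖d k‖) * ‖d k‖ := h2
        _ = (L:ℝ) * α k * ‖d k‖^2 := by ring
    have F2 : δ * α k * m ≤ f (x k) - f (x (k+1)) := by
      have h := hWolfe1 k
      rw [← hx k] at h
      have : δ * α k * ⟪gradient f (x k), d k⟫ = -(δ * α k * m) := by
        simp only [hmdef]; ring
      rw [this] at h
      linarith
    have F3 : c * ‖g k‖^2 ≤ m := hmg k
    have hgnn : (0:ℝ) ≤ ‖g k‖ := norm_nonneg _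
    have hds : (0:ℝ) < ‖d k‖^2 := pow_pos (hd2 k) 2
    have hc2 : (c * ‖g k‖^2)^2 ≤ m^2 := by
      have h0 : 0 ≤ c * ‖g k‖^2 := by positivity
      nlinarith
    have main : D * ‖g k‖^4 ≤ (L:ℝ) * (f (x k) - f (x (k+1))) * ‖d k‖^2 :=
      calc D * ‖g k‖^4 = δ * (1-σ) * (c * ‖g k‖^2)^2 := by rw [hD]; ring
        _ ≤ δ * (1-σ) * m^2 :=
            mul_le_mul_of_nonneg_left hc2 (by positivity)
        _ = (δ * m) * ((1-σ) * m) := by ring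
        _ ≤ (δ * m) * ((L:ℝ) * α k * ‖d k‖^2) :=
            mul_le_mul_of_nonneg_left F1 (mul_nonneg hδ.le hm)
        _ = ((L:ℝ) * ‖d k‖^2) * (δ * α k * m) := by ring
        _ ≤ ((L:ℝ) * ‖d k‖^2) * (f (x k) - f (x (k+1))) :=
            mul_le_mul_of_nonneg_left F2 (mul_nonneg hLpos.le hds.le)
        _ = (L:ℝ) * (f (x k) - f (x (k+1))) * ‖d k‖^2 := by ring
    rw [← mul_div_assoc, div_le_iff₀ hds]
    linarith
  have hterm_nn : ∀ k, (0:ℝ) ≤ ‖g k‖^4 / ‖d k‖^2 := fun k => by positivity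
  -- partial sums of the Zoutendijk series are bounded
  have hsum : ∀ N, ∑ k ∈ Finset.Icc 1 N, ‖g k‖^4 / ‖d k‖^2 ≤ (L:ℝ) * (f (x 0) - B) / D := by
    intro N
    have hsub : Finset.Icc 1 N ⊆ Finset.range (N+1) := by
      intro k hk
      simp only [Finset.mem_Icc] at hk
      simp only [Finset.mem_range]
      omega
    have h1 : ∑ k ∈ Finset.Icc 1 N, D * (‖g k‖^4 / ‖d k‖^2) ≤
        ∑ k ∈ Finset.range (N+1), D * (‖g k‖^4 / ‖d k‖^2) := by
      apply Finset.sum_le_sum_of_subset_of_nonneg hsub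
      intro k _ _
      exact mul_nonneg hDpos.le (hterm_nn k)
    have h2 : ∑ k ∈ Finset.range (N+1), D * (‖g k‖^4 / ‖d k‖^2) ≤
        ∑ k ∈ Finset.range (N+1), (L:ℝ) * (f (x k) - f (x (k+1))) :=
      Finset.sum_le_sum (fun k _ => key k)
    have h3 : ∑ k ∈ Finset.range (N+1), (L:ℝ) * (f (x k) - f (x (k+1)))
        = (L:ℝ) * (f (x 0) - f (x (N+1))) := by
      rw [← Finset.mul_sum, Finset.sum_range_sub' (fun k => f (x k))]
    have h4 : (L:ℝ) * (f (x 0) - f (x (N+1))) ≤ (L:ℝ) * (f (x 0) - B) := by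
      have := hB' (x (N+1))
      apply mul_le_mul_of_nonneg_left _ hLpos.le
      linarith
    have h5 : D * ∑ k ∈ Finset.Icc 1 N, ‖g k‖^4 / ‖d k‖^2 ≤ (L:ℝ) * (f (x 0) - B) := by
      rw [Finset.mul_sum]
      linarith
    rw [le_div_iff₀ hDpos]
    linarith
  -- conclude via the characterization of liminf as sSup
  rw [liminf_eq]
  set S : Set ℝ := {a | ∀ᶠ k in atTop, a ≤ ‖g k‖} with hS
  have h0S : (0:ℝ) ∈ S := Eventually.of_forall (fun k => norm_nonneg _)
  have hub : ∀ a ∈ S, a ≤ 0 := by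
    intro ε hε
    by_contra hcon
    push_neg at hcon
    obtain ⟨K, hK⟩ := eventually_atTop.mp hε
    set M : ℝ := (∑ k ∈ Finset.Icc 1 K, 1 / ‖d k‖^2) + ((L:ℝ) * (f (x 0) - B) / D) / ε^4
      with hM
    obtain ⟨N, hN⟩ := (hdiv.eventually_gt_atTop M).exists
    have hbnd : ∑ k ∈ Finset.Icc 1 N, 1 / ‖d k‖^2 ≤ M := by
      have hpt : ∀ k ∈ Finset.Icc 1 N, 1 / ‖d k‖^2 ≤
          (if k < K then 1 / ‖d k‖^2 else 0) + (‖g k‖^4 / ‖d k‖^2) / ε^4 := by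
        intro k _
        by_cases hk : k < K
        · simp only [if_pos hk]
          have : (0:ℝ) ≤ (‖g k‖^4 / ‖d k‖^2) / ε^4 := by positivity
          linarith
        · simp only [if_neg hk]
          push_neg at hk
          have hεg : ε ≤ ‖g k‖ := hK k hk
          have hε4 : ε^4 ≤ ‖g k‖^4 := by
            have h1 : 0 ≤ ε := hcon.le
            exact pow_le_pow_left₀ h1 hεg 4
          have hds : (0:ℝ) < ‖d k‖^2 := pow_pos (hd2 k) 2
          have : 1 / ‖d k‖^2 ≤ (‖g k‖^4 / ‖d k‖^2) / ε^4 := by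
            rw [div_div, div_le_div_iff₀ hds (by positivity)]
            nlinarith [hds]
          linarith
      have h1 := Finset.sum_le_sum hpt
      have h2 : ∑ k ∈ Finset.Icc 1 N,
          ((if k < K then 1 / ‖d k‖^2 else 0) + (‖g k‖^4 / ‖d k‖^2) / ε^4)
          = (∑ k ∈ Finset.Icc 1 N, if k < K then 1 / ‖d k‖^2 else 0)
            + (∑ k ∈ Finset.Icc 1 N, ‖g k‖^4 / ‖d k‖^2) / ε^4 := by
        rw [Finset.sum_add_distrib, Finset.sum_div]
      have h3 : (∑ k ∈ Finset.Icc 1 N, if k < K then 1 / ‖d k‖^2 else 0)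
          ≤ ∑ k ∈ Finset.Icc 1 K, 1 / ‖d k‖^2 := by
        rw [← Finset.sum_filter]
        apply Finset.sum_le_sum_of_subset_of_nonneg
        · intro k hk
          simp only [Finset.mem_filter, Finset.mem_Icc] at hk ⊢
          omega
        · intro k _ _; positivity
      have h4 : (∑ k ∈ Finset.Icc 1 N, ‖g k‖^4 / ‖d k‖^2) / ε^4
          ≤ ((L:ℝ) * (f (x 0) - B) / D) / ε^4 := by
        gcongr
        exact hsum N
      linarith
    linarith
  exact le_antisymm (csSup_le ⟨0, h0S⟩ hub) (le_csSup ⟨0, hub⟩ h0S)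
end

section
/- Let f : ℝ^n → ℝ be continuously differentiable, bounded below, with L-Lipschitz gradient, and let x_{k+1} = x_k + α_k·d_k with α_k > 0 satisfying the strong Wolfe–Powell conditions with parameters 0 < δ < σ < 1, where g_k = ∇f(x_k) and each d_k is a descent direction (⟨g_k, d_k⟩ < 0). Then the Zoutendijk condition holds: ∑_{k≥0} ⟨g_k, d_k⟩² / ‖d_k‖² < ∞. -/
open RealInnerProductSpace

/-- Zoutendijk condition under strong Wolfe–Powell line searches. -/
theorem zoutendijk_condition
    (n : ℕ) (f : EuclideanSpace ℝ (Fin n) → ℝ)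
    (hf : ContDiff ℝ 1 f)
    (hbdd : BddBelow (Set.range f))
    (L : NNReal) (hL : 0 < L) (hlip : LipschitzWith L (fun x => gradient f x))
    (x d : ℕ → EuclideanSpace ℝ (Fin n)) (α : ℕ → ℝ)
    (hα : ∀ k, 0 < α k)
    (hx : ∀ k, x (k + 1) = x k + α k • d k)
    (δ σ : ℝ) (hδ : 0 < δ) (hδσ : δ < σ) (hσ : σ < 1)
    (hWolfe1 : ∀ k, f (x k + α k • d k) ≤
      f (x k) + δ * α k * ⟪gradient f (x k), d k⟫)
    (hWolfe2 : ∀ k, |⟪gradient f (x k + α k • d k), d k⟫| ≤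
      σ * |⟪gradient f (x k), d k⟫|)
    (hdesc : ∀ k, ⟪gradient f (x k), d k⟫ < 0) :
    Summable (fun k : ℕ => ⟪gradient f (x k), d k⟫ ^ 2 / ‖d k‖ ^ 2) := by
  have hLpos : (0:ℝ) < (L:ℝ) := by exact_mod_cast hL
  set c : ℝ := δ * (1 - σ) / L with hc
  have hcpos : 0 < c := by
    apply div_pos (mul_pos hδ (by linarith)) hLpos
  -- key per-step decrease
  have key : ∀ k, c * (⟪gradient f (x k), d k⟫ ^ 2 / ‖d k‖ ^ 2) ≤
      f (x k) - f (x (k + 1)) := by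
    intro k
    set t : ℝ := ⟪gradient f (x k), d k⟫ with ht
    have hgd : t < 0 := hdesc k
    have hd0 : d k ≠ 0 := by
      intro h
      rw [ht, h, inner_zero_right] at hgd
      exact lt_irrefl _ hgd
    have hD : (0:ℝ) < ‖d k‖ := norm_pos_iff.2 hd0
    -- curvature condition lower bound
    have h2 := hWolfe2 k
    have habs : |t| = -t := abs_of_neg hgd
    have hcurv : σ * t ≤ ⟪gradient f (x (k+1)), d k⟫ := by
      have h2' : |⟪gradient f (x (k+1)), d k⟫| ≤ σ * (-t) := by
        rw [hx k]
        exact h2.trans_eq (by rw [← ht, habs])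
      have := (abs_le.1 h2').1
      linarith
    -- Lipschitz bound on the gradient difference
    have hlipk : ‖gradient f (x (k+1)) - gradient f (x k)‖ ≤ L * (α k * ‖d k‖) := by
      have := hlip.dist_le_mul (x (k+1)) (x k)
      rw [dist_eq_norm] at this
      have hxx : x (k+1) - x k = α k • d k := by rw [hx k]; abel
      calc ‖gradient f (x (k+1)) - gradient f (x k)‖ ≤ L * ‖x (k+1) - x k‖ := this
        _ = L * (α k * ‖d k‖) := by
            rw [hxx, norm_smul, Real.norm_eq_abs, abs_of_pos (hα k)]
    have hinner : ⟪gradient f (x (k+1)) - gradient f (x k), d k⟫ ≤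
        L * (α k * ‖d k‖) * ‖d k‖ := by
      calc ⟪gradient f (x (k+1)) - gradient f (x k), d k⟫
          ≤ ‖gradient f (x (k+1)) - gradient f (x k)‖ * ‖d k‖ := real_inner_le_norm _ _
        _ ≤ L * (α k * ‖d k‖) * ‖d k‖ := by
            apply mul_le_mul_of_nonneg_right hlipk (norm_nonneg _)
    have hA : (σ - 1) * t ≤ L * α k * ‖d k‖ ^ 2 := by
      rw [inner_sub_left] at hinner
      have : (σ - 1) * t ≤ ⟪gradient f (x (k+1)), d k⟫ - t := by
        have := hcurv; linarith
      nlinarith [hinner]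
    -- Armijo condition
    have hB : f (x (k+1)) ≤ f (x k) + δ * α k * t := by
      rw [hx k]; exact hWolfe1 k
    -- combine
    have heq : δ * (1 - σ) / (L:ℝ) * (t ^ 2 / ‖d k‖ ^ 2) =
        δ * (1 - σ) * t ^ 2 / ((L:ℝ) * ‖d k‖ ^ 2) := by ring
    rw [heq, div_le_iff₀ (mul_pos hLpos (pow_pos hD 2))]
    nlinarith [mul_pos (mul_pos hδ (hα k)) (neg_pos.2 hgd),
      mul_le_mul_of_nonneg_right hA (le_of_lt (neg_pos.2 hgd)),
      mul_pos hLpos (pow_pos hD 2), sq_nonneg t]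
  -- lower bound on f
  obtain ⟨B, hB⟩ := hbdd
  have hBle : ∀ y, B ≤ f y := fun y => hB (Set.mem_range_self y)
  -- summability via bounded partial sums
  apply summable_of_sum_range_le
    (c := (f (x 0) - B) / c)
  · intro k
    exact div_nonneg (sq_nonneg _) (sq_nonneg _)
  · intro m
    rw [le_div_iff₀ hcpos]
    have htel : ∑ i ∈ Finset.range m, (f (x i) - f (x (i+1))) = f (x 0) - f (x m) :=
      Finset.sum_range_sub' (fun i => f (x i)) m
    calc (∑ i ∈ Finset.range m, ⟪gradient f (x i), d i⟫ ^ 2 / ‖d i‖ ^ 2) * c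
        = ∑ i ∈ Finset.range m, c * (⟪gradient f (x i), d i⟫ ^ 2 / ‖d i‖ ^ 2) := by
          rw [Finset.sum_mul]; exact Finset.sum_congr rfl (fun i _ => mul_comm _ _)
      _ ≤ ∑ i ∈ Finset.range m, (f (x i) - f (x (i+1))) :=
          Finset.sum_le_sum (fun i _ => key i)
      _ = f (x 0) - f (x m) := htel
      _ ≤ f (x 0) - B := by linarith [hBle (x m)]
end

section
/- Let f : ℝ^n → ℝ be continuously differentiable, bounded below, with L-Lipschitz gradient, and let x_{k+1} = x_k + α_k·d_k with α_k > 0 satisfying the strong Wolfe–Powell conditions with parameters 0 < δ < σ < 1, where g_k = ∇f(x_k), d_k ≠ 0 for all k, and the sufficient descent condition ⟨g_k, d_k⟩ ≤ -c‖g_k‖² holds for a constant c > 0. If there exists r > 0 with ‖g_k‖ ≥ r for all k, then ∑_{k≥0} 1/‖d_k‖² < ∞. -/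
/-!
Zoutendijk's argument. The curvature condition and the Lipschitz gradient force the step to be
long, `(1 - σ) (-⟨g_k, d_k⟩) ≤ L α_k ‖d_k‖²`, so by the Armijo condition `L` times the decrease
of `f` in step `k` is at least `δ (1 - σ) ⟨g_k, d_k⟩² / ‖d_k‖²`. As `f` is bounded below, these
decreases telescope to a finite sum.
Sufficient descent with `‖g_k‖ ≥ r` gives `⟨g_k, d_k⟩² ≥ c² r⁴`, whence `∑ 1 / ‖d_k‖² < ∞`.
-/

open RealInnerProductSpace

theorem summable_of_le_sub_succ {a u : ℕ → ℝ} (ha : BddBelow (Set.range a))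
    (hu_nonneg : ∀ k, 0 ≤ u k) (hu : ∀ k, u k ≤ a k - a (k + 1)) : Summable u := by
  obtain ⟨B, hB⟩ := ha
  refine summable_of_sum_range_le hu_nonneg (c := a 0 - B) fun N => ?_
  calc ∑ k ∈ Finset.range N, u k ≤ ∑ k ∈ Finset.range N, (a k - a (k + 1)) :=
        Finset.sum_le_sum fun k _ => hu k
    _ = a 0 - a N := Finset.sum_range_sub' a N
    _ ≤ a 0 - B := by linarith [hB (Set.mem_range_self N)]

section Wolfe

variable {E : Type*} [NormedAddCommGroup E] [InnerProductSpace ℝ E]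
  {g : E → E} {L : NNReal} {δ σ : ℝ}

theorem one_sub_mul_neg_inner_le_of_curvature {x d : E} {α : ℝ} (hg : LipschitzWith L g)
    (hα : 0 ≤ α) (hcurv : σ * ⟪g x, d⟫ ≤ ⟪g (x + α • d), d⟫) :
    (1 - σ) * -⟪g x, d⟫ ≤ L * α * ‖d‖ ^ 2 := by
  have hstep : ‖g (x + α • d) - g x‖ ≤ L * (α * ‖d‖) := by
    simpa [dist_eq_norm, norm_smul, abs_of_nonneg hα] using hg.dist_le_mul (x + α • d) x
  calc (1 - σ) * -⟪g x, d⟫ ≤ ⟪g (x + α • d) - g x, d⟫ := by rw [inner_sub_left]; linarith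
    _ ≤ ‖g (x + α • d) - g x‖ * ‖d‖ := real_inner_le_norm _ _
    _ ≤ L * (α * ‖d‖) * ‖d‖ := by gcongr
    _ = L * α * ‖d‖ ^ 2 := by ring

theorem mul_inner_sq_div_le_of_wolfe {f : E → ℝ} {x d : E} {α : ℝ} (hg : LipschitzWith L g)
    (hα : 0 ≤ α) (hδ : 0 ≤ δ) (hdesc : ⟪g x, d⟫ ≤ 0)
    (harmijo : f (x + α • d) ≤ f x + δ * α * ⟪g x, d⟫)
    (hcurv : σ * ⟪g x, d⟫ ≤ ⟪g (x + α • d), d⟫) :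
    δ * (1 - σ) * (⟪g x, d⟫ ^ 2 / ‖d‖ ^ 2) ≤ L * (f x - f (x + α • d)) := by
  have hdecrease : δ * α * -⟪g x, d⟫ ≤ f x - f (x + α • d) := by linarith
  have hlong := one_sub_mul_neg_inner_le_of_curvature hg hα hcurv
  have hδt : 0 ≤ δ * -⟪g x, d⟫ := mul_nonneg hδ (neg_nonneg.mpr hdesc)
  have hdrop : 0 ≤ f x - f (x + α • d) :=
    (mul_nonneg (mul_nonneg hδ hα) (by linarith)).trans hdecrease
  rw [← mul_div_assoc]
  refine div_le_of_le_mul₀ (by positivity) (mul_nonneg L.coe_nonneg hdrop) ?_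
  calc δ * (1 - σ) * ⟪g x, d⟫ ^ 2 = δ * -⟪g x, d⟫ * ((1 - σ) * -⟪g x, d⟫) := by ring
    _ ≤ δ * -⟪g x, d⟫ * (L * α * ‖d‖ ^ 2) := by gcongr
    _ = L * ‖d‖ ^ 2 * (δ * α * -⟪g x, d⟫) := by ring
    _ ≤ L * ‖d‖ ^ 2 * (f x - f (x + α • d)) := by gcongr
    _ = L * (f x - f (x + α • d)) * ‖d‖ ^ 2 := by ring

/-- Zoutendijk's condition. -/
theorem summable_inner_sq_div_norm_sq_of_wolfe {f : E → ℝ} {x d : ℕ → E} {α : ℕ → ℝ}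
    (hf : BddBelow (Set.range fun k => f (x k))) (hg : LipschitzWith L g)
    (hα : ∀ k, 0 ≤ α k) (hx : ∀ k, x (k + 1) = x k + α k • d k) (hδ : 0 < δ) (hσ : σ < 1)
    (hdesc : ∀ k, ⟪g (x k), d k⟫ ≤ 0)
    (harmijo : ∀ k, f (x k + α k • d k) ≤ f (x k) + δ * α k * ⟪g (x k), d k⟫)
    (hcurv : ∀ k, σ * ⟪g (x k), d k⟫ ≤ ⟪g (x k + α k • d k), d k⟫) :
    Summable fun k => ⟪g (x k), d k⟫ ^ 2 / ‖d k‖ ^ 2 := by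
  have hLf : BddBelow (Set.range fun k => L * f (x k)) := by
    obtain ⟨B, hB⟩ := hf
    refine ⟨L * B, ?_⟩
    rintro _ ⟨k, rfl⟩
    exact mul_le_mul_of_nonneg_left (hB ⟨k, rfl⟩) L.coe_nonneg
  have hsummable := summable_of_le_sub_succ hLf
    (u := fun k => δ * (1 - σ) * (⟪g (x k), d k⟫ ^ 2 / ‖d k‖ ^ 2))
    (fun k => mul_nonneg (mul_nonneg hδ.le (by linarith)) (by positivity))
    fun k => by
      rw [← mul_sub, hx]
      exact mul_inner_sq_div_le_of_wolfe hg (hα k) hδ.le (hdesc k) (harmijo k) (hcurv k)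
  exact (summable_mul_left_iff (mul_pos hδ (sub_pos.mpr hσ)).ne').mp hsummable

end Wolfe

theorem gradients_bounded_away_implies_summable_general
    (n : ℕ) (f : EuclideanSpace ℝ (Fin n) → ℝ)
    (hbdd : BddBelow (Set.range f))
    (L : NNReal) (hlip : LipschitzWith L (fun x => gradient f x))
    (x d : ℕ → EuclideanSpace ℝ (Fin n)) (α : ℕ → ℝ)
    (hα : ∀ k, 0 < α k)
    (hx : ∀ k, x (k + 1) = x k + α k • d k)
    (δ σ : ℝ) (hδ : 0 < δ) (hσ : σ < 1)
    (hWolfe1 : ∀ k, f (x k + α k • d k) ≤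
      f (x k) + δ * α k * ⟪gradient f (x k), d k⟫)
    (hWolfe2 : ∀ k, |⟪gradient f (x k + α k • d k), d k⟫| ≤
      σ * |⟪gradient f (x k), d k⟫|)
    (c : ℝ) (hc : 0 < c)
    (hdesc : ∀ k, ⟪gradient f (x k), d k⟫ ≤ -c * ‖gradient f (x k)‖ ^ 2)
    (r : ℝ) (hr : 0 < r) (hg : ∀ k, r ≤ ‖gradient f (x k)‖) :
    Summable (fun k : ℕ => 1 / ‖d k‖ ^ 2) := by
  have hbound : ∀ k, ⟪gradient f (x k), d k⟫ ≤ -(c * r ^ 2) := fun k =>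
    calc ⟪gradient f (x k), d k⟫ ≤ -c * ‖gradient f (x k)‖ ^ 2 := hdesc k
      _ ≤ -(c * r ^ 2) := by rw [neg_mul, neg_le_neg_iff]; gcongr; exact hg k
  have hneg : ∀ k, ⟪gradient f (x k), d k⟫ ≤ 0 := fun k =>
    (hbound k).trans (neg_nonpos.mpr (by positivity))
  have hcurv : ∀ k, σ * ⟪gradient f (x k), d k⟫ ≤ ⟪gradient f (x k + α k • d k), d k⟫ := by
    intro k
    have hWolfe2k := hWolfe2 k
    rw [abs_of_nonpos (hneg k)] at hWolfe2k
    linarith [neg_abs_le ⟪gradient f (x k + α k • d k), d k⟫]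
  have hzoutendijk := summable_inner_sq_div_norm_sq_of_wolfe (x := x)
    (hbdd.mono (Set.range_comp_subset_range x f)) hlip (fun k => (hα k).le) hx hδ hσ hneg
    hWolfe1 hcurv
  have hsq : ∀ k, (c * r ^ 2) ^ 2 ≤ ⟪gradient f (x k), d k⟫ ^ 2 := fun k => by
    rw [← neg_sq ⟪gradient f (x k), d k⟫]
    exact pow_le_pow_left₀ (by positivity) (le_neg_of_le_neg (hbound k)) 2
  refine (hzoutendijk.div_const ((c * r ^ 2) ^ 2)).of_nonneg_of_le (fun k => by positivity)
    fun k => ?_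
  calc 1 / ‖d k‖ ^ 2 = (c * r ^ 2) ^ 2 / ‖d k‖ ^ 2 / (c * r ^ 2) ^ 2 := by field_simp
    _ ≤ ⟪gradient f (x k), d k⟫ ^ 2 / ‖d k‖ ^ 2 / (c * r ^ 2) ^ 2 :=
        div_le_div_of_nonneg_right (div_le_div_of_nonneg_right (hsq k) (by positivity))
          (by positivity)

/-- If the gradient norms are bounded away from zero, then ∑ 1/‖d k‖² converges. -/
theorem gradients_bounded_away_implies_summable
    (n : ℕ) (f : EuclideanSpace ℝ (Fin n) → ℝ)
    (hf : ContDiff ℝ 1 f)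
    (hbdd : BddBelow (Set.range f))
    (L : NNReal) (hL : 0 < L) (hlip : LipschitzWith L (fun x => gradient f x))
    (x d : ℕ → EuclideanSpace ℝ (Fin n)) (α : ℕ → ℝ)
    (hα : ∀ k, 0 < α k)
    (hx : ∀ k, x (k + 1) = x k + α k • d k)
    (δ σ : ℝ) (hδ : 0 < δ) (hδσ : δ < σ) (hσ : σ < 1)
    (hWolfe1 : ∀ k, f (x k + α k • d k) ≤
      f (x k) + δ * α k * ⟪gradient f (x k), d k⟫)
    (hWolfe2 : ∀ k, |⟪gradient f (x k + α k • d k), d k⟫| ≤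
      σ * |⟪gradient f (x k), d k⟫|)
    (hdne : ∀ k, d k ≠ 0)
    (c : ℝ) (hc : 0 < c)
    (hdesc : ∀ k, ⟪gradient f (x k), d k⟫ ≤ -c * ‖gradient f (x k)‖ ^ 2)
    (r : ℝ) (hr : 0 < r) (hg : ∀ k, r ≤ ‖gradient f (x k)‖) :
    Summable (fun k : ℕ => 1 / ‖d k‖ ^ 2) :=
  gradients_bounded_away_implies_summable_general n f hbdd L hlip x d α hα hx δ σ hδ hσ hWolfe1
    hWolfe2 c hc hdesc r hr hg
end

section
/- Let g : ℕ → ℝ^n and d : ℕ → ℝ^n be sequences with d (k+1) = -g (k+1) + β_k·d k for real coefficients β_k. Suppose there are constants Γ ≥ 0 and ω ≥ 0 with ‖g k‖ ≤ Γ and |β_k| ≤ ω for all k, and suppose each previous direction satisfies d k = s k / λ_k with ‖s k‖ ≤ h and λ_k ≥ λ* > 0 for all k. Then the whole sequence of directions is uniformly bounded: ‖d (k+1)‖ ≤ Γ + ω·h/λ* for all k ≥ 0, and consequently the series ∑_{k≥1} 1/‖d k‖² diverges provided all d k are nonzero. -/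
open Filter

/-- Uniform boundedness of the search directions in the conjugate gradient
recursion, and the resulting divergence of ∑_{k≥1} 1/‖d k‖². -/
theorem directions_uniformly_bounded_and_series_diverges
    (n : ℕ) (g d s : ℕ → EuclideanSpace ℝ (Fin n)) (β lam : ℕ → ℝ)
    (hdrec : ∀ k, d (k + 1) = -g (k + 1) + β k • d k)
    (Γ ω : ℝ) (hΓ : 0 ≤ Γ) (hω : 0 ≤ ω)
    (hg : ∀ k, ‖g k‖ ≤ Γ) (hβ : ∀ k, |β k| ≤ ω)
    (h lamStar : ℝ) (hlamStar : 0 < lamStar)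
    (hd : ∀ k, d k = (lam k)⁻¹ • s k)
    (hs : ∀ k, ‖s k‖ ≤ h) (hlam : ∀ k, lamStar ≤ lam k) :
    (∀ k, ‖d (k + 1)‖ ≤ Γ + ω * h / lamStar) ∧
      ((∀ k, d k ≠ 0) →
        Tendsto (fun N : ℕ => ∑ k ∈ Finset.Icc 1 N, 1 / ‖d k‖ ^ 2)
          atTop atTop) := by
  have hh : 0 ≤ h := le_trans (norm_nonneg _) (hs 0)
  have hdk : ∀ k, ‖d k‖ ≤ h / lamStar := by
    intro k
    rw [hd k, norm_smul]
    have hlk : lamStar ≤ lam k := hlam k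
    have hlkpos : 0 < lam k := lt_of_lt_of_le hlamStar hlk
    rw [Real.norm_eq_abs, abs_inv, abs_of_pos hlkpos]
    rw [div_eq_mul_inv, mul_comm]
    gcongr
    · exact hs k
  have hbound : ∀ k, ‖d (k + 1)‖ ≤ Γ + ω * h / lamStar := by
    intro k
    rw [hdrec k]
    calc ‖-g (k + 1) + β k • d k‖ ≤ ‖-g (k + 1)‖ + ‖β k • d k‖ := norm_add_le _ _
      _ = ‖g (k + 1)‖ + |β k| * ‖d k‖ := by rw [norm_neg, norm_smul, Real.norm_eq_abs]
      _ ≤ Γ + ω * (h / lamStar) := by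
          have := hdk k
          have := hg (k+1)
          have := hβ k
          have h1 : |β k| * ‖d k‖ ≤ ω * (h / lamStar) :=
            mul_le_mul (hβ k) (hdk k) (norm_nonneg _) hω
          linarith
      _ = Γ + ω * h / lamStar := by ring
  refine ⟨hbound, fun hne => ?_⟩
  set M : ℝ := Γ + ω * h / lamStar with hM
  have hMpos : 0 < M := lt_of_lt_of_le (norm_pos_iff.2 (hne 1)) (hbound 0)
  have key : Tendsto (fun N : ℕ => (N : ℝ) * (1 / M ^ 2)) atTop atTop := by
    apply Tendsto.atTop_mul_const (by positivity)
    exact tendsto_natCast_atTop_atTop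
  apply tendsto_atTop_mono _ key
  intro N
  have : (N : ℝ) * (1 / M ^ 2) = ∑ k ∈ Finset.Icc 1 N, 1 / M ^ 2 := by
    rw [Finset.sum_const, Nat.card_Icc]
    simp [nsmul_eq_mul]
  rw [this]
  apply Finset.sum_le_sum
  intro k hk
  have hk1 : 1 ≤ k := (Finset.mem_Icc.1 hk).1
  obtain ⟨m, rfl⟩ := Nat.exists_eq_add_of_le hk1
  have hdpos : 0 < ‖d (1 + m)‖ := norm_pos_iff.2 (hne _)
  have hle : ‖d (1 + m)‖ ≤ M := by rw [add_comm]; exact hbound m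
  apply one_div_le_one_div_of_le (by positivity)
  gcongr
end
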